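/- arXiv:2507.04013 — 3 statements merged into one kernel-verified Lean document; each statement's English description precedes it below -/
import Mathlib

section
/- Let σ be an automorphism of order m of a finite commutative ring R, and let C be a λ-constacyclic code of length n over R. Then its k-Galois dual C^{⊥_k} = {y ∈ R^n : Σ_i x_i σ^k(y_i) = 0 for all x ∈ C} is a σ^{m−k}(λ^{−1})-constacyclic code. -/
open Finset

/-- The `μ`-constacyclic shift `(c_0,…,c_{n-1}) ↦ (μ c_{n-1}, c_0, …, c_{n-2})`. -/
def cShift {R : Type*} [CommRing R] {n : ℕ} [NeZero n] (μ : R) (c : Fin n → R) :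
    Fin n → R :=
  fun i => (if i = 0 then μ else 1) * c (i - 1)

/-- If `C` is a `λ`-constacyclic code over a finite commutative ring `R` and
`σ` is an automorphism of `R` of order `m`, then the `k`-Galois dual
`C^{⊥_k} = {y : Σᵢ xᵢ σᵏ(yᵢ) = 0 ∀ x ∈ C}` is `σ^{m-k}(λ⁻¹)`-constacyclic. -/
theorem galois_dual_constacyclic {R : Type*} [CommRing R] [Fintype R]
    {n : ℕ} [NeZero n] (σ : RingAut R) (m k : ℕ) (hord : orderOf σ = m) (hk : k < m)
    (lam : Rˣ) (C : Submodule R (Fin n → R))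
    (hC : ∀ c ∈ C, cShift (lam : R) c ∈ C) :
    ∀ y : Fin n → R,
      (∀ x ∈ C, ∑ i : Fin n, x i * (σ ^ k) (y i) = 0) →
      (∀ x ∈ C, ∑ i : Fin n, x i * (σ ^ k) ((cShift ((σ ^ (m - k)) ((lam⁻¹ : Rˣ) : R)) y) i) = 0) := by
  intro y hy x hx
  -- `σ^k (σ^(m-k) a) = a`
  have hσ : ∀ a : R, (σ ^ k) ((σ ^ (m - k)) a) = a := by
    intro a
    have : (σ ^ k) * (σ ^ (m - k)) = 1 := by
      rw [← pow_add, Nat.add_sub_cancel' hk.le, ← hord, pow_orderOf_eq_one]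
    calc (σ ^ k) ((σ ^ (m - k)) a) = ((σ ^ k) * (σ ^ (m - k))) a := rfl
      _ = a := by rw [this]; rfl
  -- the shift map is injective
  have hinj : Function.Injective (fun c : Fin n → R => cShift (lam : R) c) := by
    intro c c' h
    funext j
    have h1 := congrFun h (j + 1)
    simp only [cShift, add_sub_cancel_right] at h1
    by_cases hj : (j + 1 : Fin n) = 0
    · simp only [hj, if_pos rfl] at h1
      have := congrArg (fun t => ((lam⁻¹ : Rˣ) : R) * t) h1
      simpa [← mul_assoc] using this
    · simpa [hj] using h1
  -- hence the shift is a bijection on the finite set C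
  have hsurj : ∃ z ∈ C, cShift (lam : R) z = x := by
    have : Function.Surjective (fun c : C => (⟨cShift (lam : R) (c : Fin n → R), hC c c.2⟩ : C)) := by
      apply Finite.injective_iff_surjective.mp
      intro a b hab
      exact Subtype.ext (hinj (congrArg Subtype.val hab))
    obtain ⟨z, hz⟩ := this ⟨x, hx⟩
    exact ⟨z, z.2, congrArg Subtype.val hz⟩
  obtain ⟨z, hzC, hz⟩ := hsurj
  have key : ∀ i : Fin n,
      x i * (σ ^ k) ((cShift ((σ ^ (m - k)) ((lam⁻¹ : Rˣ) : R)) y) i)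
        = z (i - 1) * (σ ^ k) (y (i - 1)) := by
    intro i
    rw [← hz]
    simp only [cShift, map_mul]
    by_cases hi : i = 0
    · have h2 : (lam : R) * ((lam⁻¹ : Rˣ) : R) = 1 := by simp
      simp only [hi, if_true, eq_self_iff_true, zero_sub, hσ]
      linear_combination z (-1 : Fin n) * (σ ^ k) (y (-1 : Fin n)) * h2
    · simp [hi]
  calc ∑ i : Fin n, x i * (σ ^ k) ((cShift ((σ ^ (m - k)) ((lam⁻¹ : Rˣ) : R)) y) i)
      = ∑ i : Fin n, z (i - 1) * (σ ^ k) (y (i - 1)) := Finset.sum_congr rfl fun i _ => key i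
    _ = ∑ j : Fin n, z j * (σ ^ k) (y j) :=
        Fintype.sum_equiv (Equiv.subRight (1 : Fin n)) _ _ (fun i => rfl)
    _ = 0 := hy z hzC
end

section
/- Let R be a finite commutative chain ring, λ ∈ U(R) with λ² = 1, and C an ideal of R^{γ_λ} C_n. Then C is an LCD code (C ∩ C^⊥ = {0}) with respect to the Euclidean inner product if and only if C is generated by an idempotent e with e* = e, where * is the classical involution. -/
/-!
In `A = R^{γ_λ} C_n` the Euclidean form is `[x, c] = (x c*)₀`, and since an ideal `C` is
closed under multiplication, `x ∈ C^⊥` iff `x C* = 0`. So `C` is LCD iff `C ∩ Ann(C*) = 0`, a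
condition that makes sense for an ideal of any commutative ring with an involution.

As `A` is finite, some power `C^(k+1)` is an idempotent ideal, hence generated by an idempotent
`e ∈ C`. The LCD condition propagates to powers: if `x ∈ C` and `x (C^j)* = 0` then `x = 0`. For
`x ∈ C`, the element `x - x e*` kills `(C^(k+1))* = A e*`, so `x = x e*`. Taking `x = e` and
conjugating gives `e* = e`, and then `C = A e`. Conversely, if `C = A e` with `e = e* = e²`, then
`x C* = 0` gives `x = x e* = 0`.
-/

open Finset

/-- Multiplication of the twisted group ring `R^{γ_λ} C_n`, where the cyclic
group `C_n` is identified with `Fin n` (additively), elements are coefficient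
vectors `Fin n → R`, and `γ_λ(gⁱ,gʲ) = 1` if `i+j < n`, `λ` if `i+j ≥ n`. -/
def ctMul {R : Type*} [CommRing R] {n : ℕ} (lam : Rˣ) (f h : Fin n → R) :
    Fin n → R :=
  fun k => ∑ i : Fin n, ∑ j : Fin n,
    if i + j = k then (if (i : ℕ) + (j : ℕ) < n then 1 else (lam : R)) * (f i * h j) else 0

/-- The classical involution on `R^{γ_λ} C_n`: `Σ αᵢ ḡⁱ ↦ Σ αᵢ ḡ⁻ⁱ`
(in coefficient form, using `ḡ⁻ⁱ = λ⁻¹ ḡ^{n-i}` for `i ≠ 0`). -/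
def ctStar {R : Type*} [CommRing R] {n : ℕ} [NeZero n] (lam : Rˣ) (f : Fin n → R) :
    Fin n → R :=
  fun j => (if j = 0 then 1 else ((lam⁻¹ : Rˣ) : R)) * f (-j)

section Twist
variable {R : Type*} [CommRing R] {n : ℕ} (lam : Rˣ)

def ctGamma (i j : Fin n) : R := if (i : ℕ) + j < n then 1 else lam

lemma ctGamma_comm (i j : Fin n) : ctGamma lam i j = ctGamma lam j i := by
  simp only [ctGamma, Nat.add_comm]

lemma ctGamma_cocycle (i j l : Fin n) :
    ctGamma lam i j * ctGamma lam (i + j) l = ctGamma lam j l * ctGamma lam i (j + l) := by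
  have := i.isLt; have := j.isLt; have := l.isLt
  simp only [ctGamma, Fin.val_add_eq_ite]
  split_ifs <;> first | omega | rfl | ring1

variable [NeZero n]

@[simp] lemma ctGamma_zero_left (j : Fin n) : ctGamma lam 0 j = 1 := by
  simp [ctGamma]

lemma ctGamma_mul_ctGamma_neg (hlam : (lam : R) ^ 2 = 1) (j : Fin n) :
    ctGamma lam j (-j) * ctGamma lam (-j) j = 1 := by
  have := j.isLt
  simp only [ctGamma, Fin.val_neg, Fin.ext_iff, Fin.val_zero]
  split_ifs <;> first | omega | ring1 | linear_combination hlam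

-- `ctGamma lam j (-j)` is the coefficient in `ctStar_apply`; this is what makes `ctStar`
-- multiplicative.
lemma ctGamma_star (hlam : (lam : R) ^ 2 = 1) (i j : Fin n) :
    ctGamma lam j (-j) * ctGamma lam i (-(j + i)) =
      ctGamma lam (-i) (j + i) * (ctGamma lam (-i) i * ctGamma lam (j + i) (-(j + i))) := by
  have := i.isLt; have := j.isLt
  simp only [ctGamma, Fin.val_neg, Fin.ext_iff, Fin.val_zero, Fin.val_add_eq_ite]
  split_ifs <;>
    first | omega | ring1 | linear_combination hlam | linear_combination (-lam : R) * hlam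

lemma ctMul_apply (f h : Fin n → R) (k : Fin n) :
    ctMul lam f h k = ∑ i, ctGamma lam i (k - i) * (f i * h (k - i)) := by
  simp only [ctMul, ← eq_sub_iff_add_eq', Finset.sum_ite_eq', Finset.mem_univ, if_true]
  rfl

lemma ctMul_comm (f h : Fin n → R) : ctMul lam f h = ctMul lam h f := by
  funext k
  simp only [ctMul_apply]
  refine Fintype.sum_equiv (Equiv.subLeft k) _ _ fun i => ?_
  rw [Equiv.subLeft_apply, sub_sub_cancel, ctGamma_comm]
  ring

lemma single_ctMul (f : Fin n → R) : ctMul lam (Pi.single 0 1) f = f := by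
  funext k
  simp [ctMul_apply, Pi.single_apply]

lemma ctMul_add (f g h : Fin n → R) :
    ctMul lam f (g + h) = ctMul lam f g + ctMul lam f h := by
  funext k
  simp only [ctMul_apply, Pi.add_apply, mul_add, Finset.sum_add_distrib]

lemma add_ctMul (f g h : Fin n → R) :
    ctMul lam (f + g) h = ctMul lam f h + ctMul lam g h := by
  simp only [ctMul_comm lam _ h, ctMul_add]

lemma ctMul_zero (f : Fin n → R) : ctMul lam f 0 = 0 := by
  funext k
  simp [ctMul_apply]

lemma zero_ctMul (f : Fin n → R) : ctMul lam 0 f = 0 := by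
  rw [ctMul_comm, ctMul_zero]

lemma ctMul_assoc (f g h : Fin n → R) :
    ctMul lam (ctMul lam f g) h = ctMul lam f (ctMul lam g h) := by
  funext k
  calc ctMul lam (ctMul lam f g) h k
      = ∑ a, ∑ i, ctGamma lam i (k - i) *
          (ctGamma lam a (i - a) * (f a * g (i - a)) * h (k - i)) := by
        simp only [ctMul_apply, Finset.sum_mul, Finset.mul_sum]
        exact Finset.sum_comm
    _ = ∑ a, ∑ b, ctGamma lam (a + b) (k - a - b) *
          (ctGamma lam a b * (f a * g b) * h (k - a - b)) := by
        refine Finset.sum_congr rfl fun a _ => Fintype.sum_equiv (Equiv.subRight a) _ _ fun i => ?_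
        rw [Equiv.subRight_apply, sub_sub, add_sub_cancel]
    _ = ∑ a, ∑ b, ctGamma lam a (k - a) *
          (f a * (ctGamma lam b (k - a - b) * (g b * h (k - a - b)))) := by
        refine Finset.sum_congr rfl fun a _ => Finset.sum_congr rfl fun b _ => ?_
        have hc := ctGamma_cocycle lam a b (k - a - b)
        rw [show b + (k - a - b) = k - a by abel] at hc
        linear_combination (f a * g b * h (k - a - b)) * hc
    _ = ctMul lam f (ctMul lam g h) k := by
        simp only [ctMul_apply, Finset.mul_sum]

lemma ctStar_apply (hlam : (lam : R) ^ 2 = 1) (f : Fin n → R) (j : Fin n) :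
    ctStar lam f j = ctGamma lam j (-j) * f (-j) := by
  have hinv : ((lam⁻¹ : Rˣ) : R) = lam := by
    rw [← mul_one ((lam⁻¹ : Rˣ) : R), ← hlam, pow_two, ← mul_assoc, Units.inv_mul,
      one_mul]
  have := j.isLt
  simp only [ctStar, ctGamma, hinv, Fin.val_neg, Fin.ext_iff, Fin.val_zero]
  split_ifs <;> first | rfl | omega

lemma ctStar_ctStar (hlam : (lam : R) ^ 2 = 1) (f : Fin n → R) :
    ctStar lam (ctStar lam f) = f := by
  funext j
  rw [ctStar_apply lam hlam, ctStar_apply lam hlam, neg_neg, ← mul_assoc,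
    ctGamma_mul_ctGamma_neg lam hlam, one_mul]

lemma ctStar_add (f g : Fin n → R) : ctStar lam (f + g) = ctStar lam f + ctStar lam g := by
  funext j
  simp only [ctStar, Pi.add_apply, mul_add]

lemma ctStar_zero : ctStar lam (0 : Fin n → R) = 0 := by
  funext j
  simp only [ctStar, Pi.zero_apply, mul_zero]

lemma ctStar_single (hlam : (lam : R) ^ 2 = 1) :
    ctStar lam (Pi.single 0 1 : Fin n → R) = Pi.single 0 1 := by
  funext j
  rw [ctStar_apply lam hlam]
  rcases eq_or_ne j 0 with rfl | hj
  · simp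
  · simp [hj]

lemma ctStar_ctMul (hlam : (lam : R) ^ 2 = 1) (f g : Fin n → R) :
    ctStar lam (ctMul lam f g) = ctMul lam (ctStar lam f) (ctStar lam g) := by
  funext j
  rw [ctStar_apply lam hlam, ctMul_apply, ctMul_apply, Finset.mul_sum]
  refine Fintype.sum_equiv (Equiv.neg (Fin n)) _ _ fun i => ?_
  rw [Equiv.neg_apply, ctStar_apply lam hlam, ctStar_apply lam hlam, neg_neg, sub_neg_eq_add,
    neg_sub_left, add_comm i j]
  linear_combination (f i * g (-(j + i))) * ctGamma_star lam hlam i j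

lemma sum_mul_eq_ctMul_ctStar_apply_zero (hlam : (lam : R) ^ 2 = 1) (x c : Fin n → R) :
    ∑ i, x i * c i = ctMul lam x (ctStar lam c) 0 := by
  rw [ctMul_apply]
  refine Finset.sum_congr rfl fun i _ => ?_
  rw [ctStar_apply lam hlam, zero_sub, neg_neg]
  linear_combination -(x i * c i) * ctGamma_mul_ctGamma_neg lam hlam i

lemma eq_zero_of_forall_ctMul_ctStar_apply_zero (hlam : (lam : R) ^ 2 = 1) {x : Fin n → R}
    (h : ∀ d, ctMul lam x (ctStar lam d) 0 = 0) : x = 0 := by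
  funext k
  simpa [← sum_mul_eq_ctMul_ctStar_apply_zero lam hlam, Pi.single_apply] using h (Pi.single k 1)

lemma forall_sum_mul_eq_zero_iff (hlam : (lam : R) ^ 2 = 1) {C : Set (Fin n → R)}
    (hC : ∀ x, ∀ c ∈ C, ctMul lam x c ∈ C) (x : Fin n → R) :
    (∀ c ∈ C, ∑ i, x i * c i = 0) ↔ ∀ c ∈ C, ctMul lam x (ctStar lam c) = 0 := by
  refine ⟨fun h c hc => eq_zero_of_forall_ctMul_ctStar_apply_zero lam hlam fun d => ?_,
    fun h c hc => ?_⟩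
  · rw [ctMul_assoc, ← ctStar_ctMul lam hlam, ctMul_comm lam c,
      ← sum_mul_eq_ctMul_ctStar_apply_zero lam hlam]
    exact h _ (hC d c hc)
  · rw [sum_mul_eq_ctMul_ctStar_apply_zero lam hlam, h c hc, Pi.zero_apply]

end Twist

-- `Fin n → R` with the multiplication `ctMul lam`; the unit `lam` only selects the twist.
def TwistedGroupRing (R : Type*) [CommRing R] (n : ℕ) (_ : Rˣ) : Type _ := Fin n → R

namespace TwistedGroupRing

variable {R : Type*} [CommRing R] {n : ℕ} [NeZero n] {lam : Rˣ}

instance : CommRing (TwistedGroupRing R n lam) :=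
  { Pi.addCommGroup with
    mul := ctMul lam
    one := Pi.single 0 1
    mul_assoc := ctMul_assoc lam
    one_mul := single_ctMul lam
    mul_one := fun f => (ctMul_comm lam f _).trans (single_ctMul lam f)
    left_distrib := ctMul_add lam
    right_distrib := add_ctMul lam
    zero_mul := zero_ctMul lam
    mul_zero := ctMul_zero lam
    mul_comm := ctMul_comm lam }

instance [Finite R] : Finite (TwistedGroupRing R n lam) := Pi.finite

def ofSubmodule (C : Submodule R (Fin n → R))
    (hC : ∀ x : Fin n → R, ∀ c ∈ C, ctMul lam x c ∈ C) :
    Ideal (TwistedGroupRing R n lam) where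
  carrier := (C : Set (Fin n → R))
  add_mem' := C.add_mem
  zero_mem' := C.zero_mem
  smul_mem' := hC

def starRingHom (hlam : (lam : R) ^ 2 = 1) :
    TwistedGroupRing R n lam →+* TwistedGroupRing R n lam where
  toFun := ctStar lam
  map_one' := ctStar_single lam hlam
  map_mul' := ctStar_ctMul lam hlam
  map_zero' := ctStar_zero lam
  map_add' := ctStar_add lam

lemma starRingHom_involutive (hlam : (lam : R) ^ 2 = 1) :
    Function.Involutive (starRingHom (n := n) hlam) :=
  ctStar_ctStar lam hlam

end TwistedGroupRing

namespace Ideal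

variable {A : Type*} [CommRing A]

def IsLCD (σ : A →+* A) (I : Ideal A) : Prop :=
  ∀ x ∈ I, (∀ c ∈ I, x * σ c = 0) → x = 0

theorem IsLCD.eq_zero_of_forall_mul_map_pow {σ : A →+* A} {I : Ideal A} (hI : I.IsLCD σ)
    (j : ℕ) {x : A} (hx : x ∈ I) (h : ∀ c ∈ I ^ j, x * σ c = 0) : x = 0 := by
  induction j generalizing x with
  | zero => simpa using h 1 (by simp)
  | succ j ih =>
    refine ih hx fun y hy => hI _ (I.mul_mem_right _ hx) fun c hc => ?_
    rw [mul_assoc, ← map_mul]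
    exact h _ (pow_succ I j ▸ mul_mem_mul hy hc)

theorem exists_isIdempotentElem_pow_succ_eq_span [IsArtinianRing A] (I : Ideal A) :
    ∃ k : ℕ, ∃ e : A, IsIdempotentElem e ∧ I ^ (k + 1) = span {e} := by
  obtain ⟨k, hk⟩ := IsArtinian.monotone_stabilizes
    ⟨fun m => OrderDual.toDual (I ^ (m + 1)), fun _ _ h => pow_le_pow_right (by omega)⟩
  refine ⟨k, (isIdempotentElem_iff_of_fg _ (IsNoetherian.noetherian _)).mp ?_⟩
  have := hk (k + 1 + k) (by omega)
  rw [IsIdempotentElem, ← pow_add]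
  exact this.symm

theorem IsLCD.exists_isIdempotentElem [IsArtinianRing A] {σ : A →+* A}
    (hσ : Function.Involutive σ) {I : Ideal A} (hI : I.IsLCD σ) :
    ∃ e, IsIdempotentElem e ∧ σ e = e ∧ I = span {e} := by
  obtain ⟨k, e, he, hIk⟩ := I.exists_isIdempotentElem_pow_succ_eq_span
  have heI : e ∈ I := pow_le_self k.succ_ne_zero (hIk ▸ mem_span_singleton_self e)
  have hfix : ∀ x ∈ I, x * σ e = x := by
    intro x hx
    refine sub_eq_zero.mp (hI.eq_zero_of_forall_mul_map_pow (k + 1)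
      (I.sub_mem (I.mul_mem_right _ hx) hx) fun c hc => ?_)
    obtain ⟨a, rfl⟩ := mem_span_singleton'.mp (hIk ▸ hc)
    rw [map_mul]
    linear_combination (x * σ a) * (he.map σ).eq
  have hσe : σ e = e := by
    have h := congrArg σ (hfix e heI)
    rw [map_mul, hσ e, mul_comm] at h
    rw [← h, hfix e heI]
  refine ⟨e, he, hσe, le_antisymm (fun x hx => ?_) ((span_singleton_le_iff_mem _).mpr heI)⟩
  exact mem_span_singleton'.mpr ⟨x, by rw [← hσe, hfix x hx]⟩

theorem isLCD_span_singleton {σ : A →+* A} {e : A} (he : IsIdempotentElem e) (hσe : σ e = e) :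
    (span {e}).IsLCD σ := by
  intro x hx h
  obtain ⟨a, rfl⟩ := mem_span_singleton'.mp hx
  simpa [mul_assoc, hσe, he.eq] using h e (mem_span_singleton_self e)

theorem isLCD_iff_exists_isIdempotentElem [IsArtinianRing A] {σ : A →+* A}
    (hσ : Function.Involutive σ) (I : Ideal A) :
    I.IsLCD σ ↔ ∃ e, IsIdempotentElem e ∧ σ e = e ∧ I = span {e} :=
  ⟨fun hI => hI.exists_isIdempotentElem hσ,
    fun ⟨_, he, hσe, hIe⟩ => hIe ▸ isLCD_span_singleton he hσe⟩

end Ideal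

theorem euclidean_LCD_iff_idempotent_general {R : Type*} [CommRing R]
    [Fintype R]
    {n : ℕ} [NeZero n]
    (lam : Rˣ) (hlam : (lam : R) ^ 2 = 1)
    (C : Submodule R (Fin n → R))
    (hC : ∀ x : Fin n → R, ∀ c ∈ C, ctMul lam x c ∈ C) :
    (∀ x ∈ C, (∀ c ∈ C, ∑ i : Fin n, x i * c i = 0) → x = 0) ↔
      ∃ e : Fin n → R, ctMul lam e e = e ∧ ctStar lam e = e ∧
        (∀ x, x ∈ C ↔ ∃ a : Fin n → R, x = ctMul lam a e) := by
  refine (forall₂_congr fun x _ =>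
    imp_congr_left (forall_sum_mul_eq_zero_iff lam hlam hC x)).trans ?_
  refine (Ideal.isLCD_iff_exists_isIdempotentElem (TwistedGroupRing.starRingHom_involutive hlam)
    (TwistedGroupRing.ofSubmodule C hC)).trans ?_
  refine exists_congr fun e => and_congr Iff.rfl (and_congr Iff.rfl ?_)
  rw [SetLike.ext_iff]
  exact forall_congr' fun x =>
    iff_congr Iff.rfl (Ideal.mem_span_singleton'.trans (exists_congr fun a => eq_comm))

/-- Over a finite commutative chain ring `R` with `char(R/J(R)) ∤ n` and
`λ² = 1`, an ideal `C` of `R^{γ_λ} C_n` is an LCD code for the Euclidean inner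
product (`C ∩ C^⊥ = {0}`) iff `C` is generated by an idempotent `e` with
`e* = e`. -/
theorem euclidean_LCD_iff_idempotent {R : Type*} [CommRing R]
    [Fintype R] [IsLocalRing R]
    (hchain : (IsLocalRing.maximalIdeal R).IsPrincipal)
    {n : ℕ} [NeZero n]
    (hn : ¬ (ringChar (IsLocalRing.ResidueField R) ∣ n))
    (lam : Rˣ) (hlam : (lam : R) ^ 2 = 1)
    (C : Submodule R (Fin n → R))
    (hC : ∀ x : Fin n → R, ∀ c ∈ C, ctMul lam x c ∈ C) :
    (∀ x ∈ C, (∀ c ∈ C, ∑ i : Fin n, x i * c i = 0) → x = 0) ↔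
      ∃ e : Fin n → R, ctMul lam e e = e ∧ ctStar lam e = e ∧
        (∀ x, x ∈ C ↔ ∃ a : Fin n → R, x = ctMul lam a e) :=
  euclidean_LCD_iff_idempotent_general lam hlam C hC
end

section
/- Let R be a finite commutative chain ring. A cyclic code C ⊆ R^n (with gcd(n, char(R/J(R))) = 1) is LCD with respect to the Euclidean inner product if and only if C = ⟨e⟩ for an idempotent e of the group ring RC_n with e* = e. -/
/-!
Let `σ` be the involution of the group ring `A = R[Cₙ]`, a finite, hence Artinian, ring. For an
ideal `C` of `A` some power `C ^ k` is idempotent, hence generated by an idempotent `e ∈ C`, and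
`c * (1 - e)` is nilpotent for every `c ∈ C`. If `C` is LCD, the ideal `J = C * (1 - σ e)`
satisfies `J * σ(C) ⊆ J * nil(A)`; by induction on `j`, `J * nil(A) ^ j = 0` forces
`J * nil(A) ^ (j - 1) = 0`, so `J = 0`, i.e. `c * σ e = c` on `C`. Applying `σ` to
`e * σ e = e` gives `σ e = e`, and then `C = (e)`.
-/

open Finset

/-- The cyclic shift `(c_0,…,c_{n-1}) ↦ (c_{n-1}, c_0, …, c_{n-2})`. -/
def cycShift {R : Type*} [CommRing R] {n : ℕ} [NeZero n] (c : Fin n → R) :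
    Fin n → R :=
  fun i => c (i - 1)

namespace Ideal

variable {A : Type*} [CommRing A]

theorem eq_bot_of_mul_le_mul_of_isNilpotent {C D I N : Ideal A}
    (hC : ∀ J ≤ C, J * D = ⊥ → J = ⊥) (hI : I ≤ C) (hID : I * D ≤ I * N)
    (hN : IsNilpotent N) : I = ⊥ := by
  obtain ⟨k, hk⟩ := hN
  suffices ∀ j, I * N ^ j = ⊥ → I = ⊥ from this k (by rw [hk, zero_eq_bot, mul_bot])
  intro j
  induction j with
  | zero => simp
  | succ j ih =>
    refine fun h ↦ ih (hC _ (mul_le_left.trans hI) (eq_bot_iff.mpr ?_))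
    calc I * N ^ j * D = N ^ j * (I * D) := by ring
      _ ≤ N ^ j * (I * N) := mul_mono_right hID
      _ = I * N ^ (j + 1) := by ring
      _ = ⊥ := h

theorem mul_eq_self_of_one_sub_mul_mem {C D N : Ideal A} {f : A}
    (hC : ∀ J ≤ C, J * D = ⊥ → J = ⊥) (hN : IsNilpotent N) (hf : IsIdempotentElem f)
    (hfD : ∀ t ∈ D, (1 - f) * t ∈ N) {c : A} (hc : c ∈ C) : c * f = c := by
  set I := C * span {1 - f}
  have hI : I = ⊥ := by
    refine eq_bot_of_mul_le_mul_of_isNilpotent hC mul_le_left (mul_le.mpr ?_) hN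
    intro r hr t ht
    obtain ⟨z, -, rfl⟩ := Submodule.mem_mul_span_singleton.mp hr
    rw [← hf.one_sub.eq, ← mul_assoc, mul_assoc _ _ t]
    exact mul_mem_mul hr (hfD t ht)
  have hc' : c * (1 - f) ∈ I := mul_mem_mul hc (mem_span_singleton_self _)
  rw [hI, mem_bot, mul_sub, mul_one, sub_eq_zero] at hc'
  exact hc'.symm

theorem exists_pow_eq_span_isIdempotentElem [IsArtinianRing A] (C : Ideal A) :
    ∃ k e, IsIdempotentElem e ∧ C ^ (k + 1) = span {e} := by
  obtain ⟨n, hn⟩ := IsArtinian.monotone_stabilizes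
    ⟨fun k ↦ OrderDual.toDual (C ^ k), fun _ _ h ↦ pow_le_pow_right h⟩
  have hidem : IsIdempotentElem (C ^ (n + 1)) := by
    rw [IsIdempotentElem, ← pow_add]
    exact (hn (n + 1 + (n + 1)) (by omega)).symm.trans (hn (n + 1) (by omega))
  obtain ⟨e, he, hCe⟩ := ((C ^ (n + 1)).isIdempotentElem_iff_of_fg
    (IsNoetherian.noetherian _)).mp hidem
  exact ⟨n, e, he, by rw [hCe, submodule_span_eq]⟩

theorem exists_isIdempotentElem_mem_and_isNilpotent_mul_one_sub [IsArtinianRing A]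
    (I : Ideal A) : ∃ e ∈ I, IsIdempotentElem e ∧ ∀ c ∈ I, IsNilpotent (c * (1 - e)) := by
  obtain ⟨k, e, he, hIe⟩ := I.exists_pow_eq_span_isIdempotentElem
  refine ⟨e, pow_le_self k.succ_ne_zero (hIe ▸ mem_span_singleton_self e), he,
    fun c hc ↦ ⟨k + 1, ?_⟩⟩
  obtain ⟨a, ha⟩ := mem_span_singleton'.mp (hIe ▸ pow_mem_pow hc (k + 1))
  rw [mul_pow, he.one_sub.pow_succ_eq, ← ha, mul_assoc, he.mul_one_sub_self, mul_zero]

theorem IsLCD.mul_map_eq_self [IsArtinianRing A] {σ : A →+* A} (hσ : Function.Involutive σ)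
    {I : Ideal A} (hI : I.IsLCD σ) {e : A} (he : IsIdempotentElem e)
    (hnil : ∀ c ∈ I, IsNilpotent (c * (1 - e))) {c : A} (hc : c ∈ I) : c * σ e = c := by
  refine mul_eq_self_of_one_sub_mul_mem (D := I.comap σ) (fun J hJ h ↦ ?_)
    IsArtinianRing.isNilpotent_nilradical (he.map σ) (fun t ht ↦ ?_) hc
  · refine eq_bot_iff.mpr fun x hx ↦ hI x (hJ hx) fun c hc ↦ ?_
    have hσc : σ c ∈ I.comap σ := by rwa [mem_comap, hσ c]
    simpa [h] using mul_mem_mul hx hσc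
  · have : (1 - σ e) * t = σ (σ t * (1 - e)) := by rw [map_mul, hσ t, map_sub, map_one, mul_comm]
    exact this ▸ mem_nilradical.mpr ((hnil _ ht).map σ)

theorem isLCD_iff [IsArtinianRing A] {σ : A →+* A} (hσ : Function.Involutive σ) {I : Ideal A} :
    I.IsLCD σ ↔ ∃ e, IsIdempotentElem e ∧ σ e = e ∧ I = span {e} := by
  constructor
  · intro hI
    obtain ⟨e, heI, he, hnil⟩ := I.exists_isIdempotentElem_mem_and_isNilpotent_mul_one_sub
    have hσe : ∀ c ∈ I, c * σ e = c := fun c ↦ hI.mul_map_eq_self hσ he hnil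
    have he_fixed : σ e = e := by
      have h := congrArg σ (hσe e heI)
      rw [map_mul, hσ e] at h
      rw [← h, mul_comm, hσe e heI]
    refine ⟨e, he, he_fixed, le_antisymm (fun c hc ↦ ?_) ((span_singleton_le_iff_mem I).mpr heI)⟩
    exact mem_span_singleton'.mpr ⟨c, he_fixed ▸ hσe c hc⟩
  · rintro ⟨e, he, hσe, rfl⟩ x hx h
    obtain ⟨a, rfl⟩ := mem_span_singleton'.mp hx
    simpa [hσe, mul_assoc, he.eq] using h e (mem_span_singleton_self e)

end Ideal

open AddMonoidAlgebra

namespace AddMonoidAlgebra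

section FiniteGroup

variable {R : Type*} [CommRing R] {G : Type*}

variable (R G) in
noncomputable def funEquiv [Finite G] : R[G] ≃ₗ[R] (G → R) :=
  (coeffLinearEquiv R).trans (Finsupp.linearEquivFunOnFinite R R G)

@[simp]
theorem funEquiv_apply [Finite G] (x : R[G]) (g : G) : funEquiv R G x g = x.coeff g := rfl

instance [Finite R] [Finite G] : Finite R[G] := .of_equiv _ (funEquiv R G).symm.toEquiv

variable [AddCommGroup G]

variable (R G) in
noncomputable def classicalInvolution : R[G] →+* R[G] :=
  mapDomainRingEquiv R (AddEquiv.neg G)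

@[simp]
theorem coeff_classicalInvolution (x : R[G]) (g : G) :
    (classicalInvolution R G x).coeff g = x.coeff (-g) := by
  simp [classicalInvolution]

theorem classicalInvolution_involutive : Function.Involutive (classicalInvolution R G) :=
  fun x ↦ ext <| Finsupp.ext fun g ↦ by simp

@[simp]
theorem classicalInvolution_single (g : G) (r : R) :
    classicalInvolution R G (single g r) = single (-g) r := by
  simp [classicalInvolution]

theorem coeff_mul_classicalInvolution (x c : R[G]) (g : G) :
    (x * classicalInvolution R G c).coeff g =
      (x * classicalInvolution R G (single g 1 * c)).coeff 0 := by
  rw [map_mul, classicalInvolution_single, mul_left_comm, coeff_single_mul_apply]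
  simp

variable [Fintype G]

theorem coeff_mul_eq_sum (x y : R[G]) (g : G) :
    (x * y).coeff g = ∑ i, x.coeff i * y.coeff (g - i) := by
  rw [coeff_mul_apply_left, Finsupp.sum_fintype _ _ (by simp)]
  simp [sub_eq_neg_add]

theorem coeff_mul_classicalInvolution_zero (x c : R[G]) :
    (x * classicalInvolution R G c).coeff 0 = ∑ i, x.coeff i * c.coeff i := by
  simp [coeff_mul_eq_sum]

theorem forall_mul_classicalInvolution_eq_zero_iff {I : Ideal R[G]} {x : R[G]} :
    (∀ c ∈ I, x * classicalInvolution R G c = 0) ↔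
      ∀ c ∈ I, ∑ i, x.coeff i * c.coeff i = 0 := by
  refine ⟨fun h c hc ↦ ?_, fun h c hc ↦ ext <| Finsupp.ext fun g ↦ ?_⟩
  · rw [← coeff_mul_classicalInvolution_zero, h c hc]
    simp
  · rw [coeff_mul_classicalInvolution, coeff_mul_classicalInvolution_zero,
      h _ (I.mul_mem_left _ hc)]
    simp

end FiniteGroup

section Cyclic

variable {R : Type*} [CommRing R] {n : ℕ} [NeZero n]

theorem funEquiv_mul (x y : R[Fin n]) :
    funEquiv R (Fin n) (x * y) = ctMul 1 (funEquiv R (Fin n) x) (funEquiv R (Fin n) y) := by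
  funext k
  simp only [funEquiv_apply, coeff_mul_eq_sum, ctMul, Units.val_one, ite_self, one_mul,
    ← eq_sub_iff_add_eq', Finset.sum_ite_eq', Finset.mem_univ, if_true]

theorem funEquiv_classicalInvolution (x : R[Fin n]) :
    funEquiv R (Fin n) (classicalInvolution R (Fin n) x) = ctStar 1 (funEquiv R (Fin n) x) := by
  funext k
  simp [ctStar]

theorem funEquiv_single_one_mul (x : R[Fin n]) :
    funEquiv R (Fin n) (single 1 1 * x) = cycShift (funEquiv R (Fin n) x) := by
  funext k
  simp [cycShift, coeff_single_mul_apply, neg_add_eq_sub]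

end Cyclic

end AddMonoidAlgebra

namespace CyclicCode

variable {R : Type*} [CommRing R] {n : ℕ} [NeZero n] {C : Submodule R (Fin n → R)}

open Fin.NatCast in
theorem mul_mem_of_cycShift_mem (hC : ∀ c ∈ C, cycShift c ∈ C) {x : R[Fin n]}
    (hx : funEquiv R (Fin n) x ∈ C) (a : R[Fin n]) : funEquiv R (Fin n) (a * x) ∈ C := by
  induction a using AddMonoidAlgebra.induction_linear with
  | zero => simp
  | add a b ha hb => simpa [add_mul] using C.add_mem ha hb
  | single g r =>
    have hpow : ∀ m : ℕ, funEquiv R (Fin n) (single 1 1 ^ m * x) ∈ C := by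
      intro m
      induction m with
      | zero => simpa using hx
      | succ m ih =>
        rw [pow_succ', mul_assoc, funEquiv_single_one_mul]
        exact hC _ ih
    have hg : single g r = r • single (1 : Fin n) (1 : R) ^ (g : ℕ) := by
      rw [single_pow, smul_single, one_pow, smul_eq_mul, mul_one]
      simp only [nsmul_one, Fin.cast_val_eq_self]
    rw [hg, smul_mul_assoc, map_smul]
    exact C.smul_mem r (hpow _)

variable (C) in
noncomputable def ideal (hC : ∀ c ∈ C, cycShift c ∈ C) : Ideal R[Fin n] where
  __ := (C.comap (funEquiv R (Fin n)).toLinearMap).toAddSubmonoid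
  smul_mem' a _ hx := mul_mem_of_cycShift_mem hC hx a

variable {hC : ∀ c ∈ C, cycShift c ∈ C}

@[simp]
theorem mem_ideal {x : R[Fin n]} : x ∈ ideal C hC ↔ funEquiv R (Fin n) x ∈ C := Iff.rfl

theorem isLCD_ideal_iff : (ideal C hC).IsLCD (classicalInvolution R (Fin n)) ↔
    ∀ x ∈ C, (∀ c ∈ C, ∑ i, x i * c i = 0) → x = 0 := by
  refine (funEquiv R (Fin n)).toEquiv.forall_congr fun x ↦ ?_
  rw [forall_mul_classicalInvolution_eq_zero_iff]
  refine imp_congr mem_ideal (imp_congr ((funEquiv R (Fin n)).toEquiv.forall_congr fun c ↦ ?_) ?_)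
  · simp
  · exact (map_eq_zero_iff _ (funEquiv R (Fin n)).injective).symm

theorem ideal_eq_span_singleton_iff (e : R[Fin n]) : ideal C hC = Ideal.span {e} ↔
    ∀ x, x ∈ C ↔ ∃ a, x = ctMul 1 a (funEquiv R (Fin n) e) := by
  rw [Ideal.ext_iff]
  refine (funEquiv R (Fin n)).toEquiv.forall_congr fun x ↦ ?_
  rw [mem_ideal, Ideal.mem_span_singleton']
  refine iff_congr Iff.rfl ((funEquiv R (Fin n)).toEquiv.exists_congr fun a ↦ ?_)
  simp [← funEquiv_mul, eq_comm]

end CyclicCode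

theorem cyclic_LCD_iff_idempotent_general {R : Type*} [CommRing R]
    [Fintype R]
    {n : ℕ} [NeZero n]
    (C : Submodule R (Fin n → R))
    (hC : ∀ c ∈ C, cycShift c ∈ C) :
    (∀ x ∈ C, (∀ c ∈ C, ∑ i : Fin n, x i * c i = 0) → x = 0) ↔
      ∃ e : Fin n → R, ctMul 1 e e = e ∧ ctStar 1 e = e ∧
        (∀ x, x ∈ C ↔ ∃ a : Fin n → R, x = ctMul 1 a e) := by
  rw [← CyclicCode.isLCD_ideal_iff (hC := hC), Ideal.isLCD_iff classicalInvolution_involutive]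
  refine (funEquiv R (Fin n)).toEquiv.exists_congr fun e ↦ ?_
  simp only [IsIdempotentElem, CyclicCode.ideal_eq_span_singleton_iff, ← funEquiv_mul,
    ← funEquiv_classicalInvolution, LinearEquiv.coe_toEquiv, (funEquiv R (Fin n)).injective.eq_iff]

/-- Over a finite commutative chain ring `R` with `gcd(n, char(R/J(R))) = 1`,
a cyclic code `C ⊆ Rⁿ` (identified with an ideal of the group ring `RC_n`,
i.e. `R^{γ_1} C_n`) is LCD for the Euclidean inner product iff `C = ⟨e⟩` for
an idempotent `e` with `e* = e`. -/
theorem cyclic_LCD_iff_idempotent {R : Type*} [CommRing R]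
    [Fintype R] [IsLocalRing R]
    (hchain : (IsLocalRing.maximalIdeal R).IsPrincipal)
    {n : ℕ} [NeZero n]
    (hn : Nat.gcd n (ringChar (IsLocalRing.ResidueField R)) = 1)
    (C : Submodule R (Fin n → R))
    (hC : ∀ c ∈ C, cycShift c ∈ C) :
    (∀ x ∈ C, (∀ c ∈ C, ∑ i : Fin n, x i * c i = 0) → x = 0) ↔
      ∃ e : Fin n → R, ctMul 1 e e = e ∧ ctStar 1 e = e ∧
        (∀ x, x ∈ C ↔ ∃ a : Fin n → R, x = ctMul 1 a e) :=
  cyclic_LCD_iff_idempotent_general C hC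
end
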